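/- arXiv:0906.4560 — 4 statements merged into one kernel-verified Lean document; each statement's English description precedes it below -/
import Mathlib

section
/- Let I be a finite set of keys, and for each key i let w1(i), w2(i) ≥ 0. For each i independently, draw r'(i) ~ Exp(min(w1(i), w2(i))) and r''(i) ~ Exp(|w1(i) - w2(i)|) independently (an Exp(0) variable is interpreted as +∞). Set the minimum rank over assignment 1 to be M1 = min over i of (r'(i) if w1(i) ≤ w2(i), else min(r'(i), r''(i))), and symmetrically for M2. Then P(M1 = M2) = (Σᵢ min(w1(i), w2(i))) / (Σᵢ max(w1(i), w2(i))), provided the denominator is positive. -/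
/-!
Let `R` be the minimum of the shared clocks `r' i`, and `D₁`, `D₂` the minima of the private
clocks `r'' i` over the keys where `w1`, resp. `w2`, is the strictly larger weight. The two
minimum ranks are `min R D₁` and `min R D₂`, and these agree iff `R ≤ min D₁ D₂` or `D₁ = D₂`.
A tie `D₁ = D₂ < ∞` of independent exponentials has probability zero, while `R` and `min D₁ D₂`
are independent exponentials of rates `∑ min (w1 i) (w2 i)` and `∑ |w1 i - w2 i|`, which sum to
`∑ max (w1 i) (w2 i)`. For independent `X ~ Exp l`, `Y ~ Exp m` one has
`P(X < Y) = E[exp (-m X)] = l / (l + m)`, and the layer-cake formula turns this Laplace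
transform into `∫₀¹ (1 - t ^ (l / m)) dt`.
-/

open MeasureTheory ProbabilityTheory Set Filter Topology
open scoped ENNReal symmDiff

lemma min_eq_min_iff {α : Type*} [LinearOrder α] {a b c : α} :
    min a b = min a c ↔ a ≤ min b c ∨ b = c := by
  grind

lemma iInf_ite_min_eq_biInf {ι α : Type*} [CompleteLinearOrder α] [Fintype ι] (c : ι → Prop)
    [DecidablePred c] (f g : ι → α) :
    ⨅ i, (if c i then f i else min (f i) (g i)) =
      ⨅ p ∈ Finset.univ.filter (fun p : ι × Bool => p.2 = true ∨ ¬ c p.1),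
        (if p.2 then f p.1 else g p.1) := by
  simp only [Finset.mem_filter, Finset.mem_univ, true_and, iInf_prod, iInf_bool_eq]
  refine iInf_congr fun i => ?_
  by_cases h : c i <;> simp [h]

lemma lintegral_Ioi_ofReal_one_sub_rpow {p : ℝ} (hp : 0 ≤ p) :
    ∫⁻ t in Ioi (0 : ℝ), ENNReal.ofReal (1 - t ^ p) = ENNReal.ofReal (p / (p + 1)) := by
  have hrpow : IntervalIntegrable (fun t : ℝ => t ^ p) volume 0 1 :=
    intervalIntegral.intervalIntegrable_rpow' (by linarith)
  have hvanish : ∫⁻ t in Ioi (1 : ℝ), ENNReal.ofReal (1 - t ^ p) = 0 :=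
    (setLIntegral_congr_fun measurableSet_Ioi fun t (ht : 1 < t) =>
      ENNReal.ofReal_eq_zero.2 (sub_nonpos.2 (Real.one_le_rpow ht.le hp))).trans lintegral_zero
  have hnn : 0 ≤ᵐ[volume.restrict (Ioc 0 1)] fun t : ℝ => 1 - t ^ p := by
    filter_upwards [ae_restrict_mem measurableSet_Ioc] with t ht
    exact sub_nonneg.2 (Real.rpow_le_one ht.1.le ht.2 hp)
  rw [← Ioc_union_Ioi_eq_Ioi zero_le_one,
    lintegral_union measurableSet_Ioi Ioc_disjoint_Ioi_same, hvanish, add_zero,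
    ← ofReal_integral_eq_lintegral_ofReal (intervalIntegrable_const.sub hrpow).1 hnn,
    ← intervalIntegral.integral_of_le zero_le_one,
    intervalIntegral.integral_sub intervalIntegrable_const hrpow,
    integral_rpow (Or.inl (by linarith))]
  congr 1
  simp [Real.zero_rpow (by linarith : p + 1 ≠ 0)]
  field_simp
  ring

namespace ProbabilityTheory

variable {Ω : Type*} [MeasurableSpace Ω] {P : Measure Ω} {X Y : Ω → ℝ≥0∞} {l m : ℝ}

def HasExpTail (P : Measure Ω) (X : Ω → ℝ≥0∞) (l : ℝ) : Prop :=
  ∀ t : ℝ, 0 ≤ t → P {ω | ENNReal.ofReal t < X ω} = ENNReal.ofReal (Real.exp (-l * t))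

noncomputable def expSurvival (l : ℝ) (x : ℝ≥0∞) : ℝ :=
  if x = ∞ then 0 else Real.exp (-l * x.toReal)

lemma measurable_expSurvival (l : ℝ) : Measurable (expSurvival l) :=
  Measurable.ite (measurableSet_singleton ∞) measurable_const
    (ENNReal.measurable_toReal.const_mul (-l)).exp

lemma expSurvival_nonneg (l : ℝ) (x : ℝ≥0∞) : 0 ≤ expSurvival l x := by
  unfold expSurvival
  split_ifs
  exacts [le_rfl, (Real.exp_pos _).le]

lemma expSurvival_le_one (hl : 0 ≤ l) (x : ℝ≥0∞) : expSurvival l x ≤ 1 := by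
  unfold expSurvival
  split_ifs
  · exact zero_le_one
  · exact Real.exp_le_one_iff.2
      (mul_nonpos_of_nonpos_of_nonneg (neg_nonpos.2 hl) ENNReal.toReal_nonneg)

lemma le_expSurvival_iff (hl : 0 < l) {t : ℝ} (ht₀ : 0 < t) (ht₁ : t ≤ 1) (x : ℝ≥0∞) :
    t ≤ expSurvival l x ↔ x ≤ ENNReal.ofReal (-Real.log t / l) := by
  unfold expSurvival
  split_ifs with hx
  · simp [hx, ht₀.not_ge]
  · have hc : 0 ≤ -Real.log t / l := div_nonneg (neg_nonneg.2 (Real.log_nonpos ht₀.le ht₁)) hl.le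
    rw [← Real.log_le_iff_le_exp ht₀, ENNReal.le_ofReal_iff_toReal_le hx hc, le_div_iff₀ hl]
    constructor <;> intro h <;> linarith

lemma IndepFun.measure_lt_eq_lintegral [IsFiniteMeasure P] (hInd : IndepFun X Y P)
    (hX : Measurable X) (hY : Measurable Y) :
    P {ω | X ω < Y ω} = ∫⁻ x, P {ω | x < Y ω} ∂(P.map X) := by
  have hs : MeasurableSet {p : ℝ≥0∞ × ℝ≥0∞ | p.1 < p.2} :=
    measurableSet_lt measurable_fst measurable_snd
  calc P {ω | X ω < Y ω} = P.map (fun ω => (X ω, Y ω)) {p | p.1 < p.2} :=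
        (Measure.map_apply (hX.prodMk hY) hs).symm
    _ = ((P.map X).prod (P.map Y)) {p | p.1 < p.2} := by
        rw [(indepFun_iff_map_prod_eq_prod_map_map hX.aemeasurable hY.aemeasurable).1 hInd]
    _ = ∫⁻ x, P.map Y (Ioi x) ∂(P.map X) := Measure.prod_apply hs
    _ = _ := lintegral_congr fun x => Measure.map_apply hY measurableSet_Ioi

namespace HasExpTail

lemma measure_gt (hX : HasExpTail P X l) (x : ℝ≥0∞) :
    P {ω | x < X ω} = ENNReal.ofReal (expSurvival l x) := by
  by_cases hx : x = ∞
  · simp [hx, expSurvival]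
  · simpa [expSurvival, hx, ENNReal.ofReal_toReal hx] using hX x.toReal ENNReal.toReal_nonneg

lemma ae_ne_top (hX : HasExpTail P X l) (hl : 0 < l) : ∀ᵐ ω ∂P, X ω ≠ ∞ := by
  have hlim : Tendsto (fun t => ENNReal.ofReal (Real.exp (-l * t))) atTop (𝓝 0) := by
    have := Real.tendsto_exp_neg_atTop_nhds_zero.comp (tendsto_id.const_mul_atTop hl)
    simpa [Function.comp_def, neg_mul] using ENNReal.tendsto_ofReal this
  refine ae_iff.2 (le_antisymm (ge_of_tendsto hlim ?_) bot_le)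
  filter_upwards [eventually_ge_atTop 0] with t ht
  rw [← hX t ht]
  exact measure_mono fun ω hω => by simp_all

variable [IsProbabilityMeasure P]

lemma rate_nonneg (hX : HasExpTail P X l) : 0 ≤ l := by
  have h : ENNReal.ofReal (Real.exp (-l * 1)) ≤ 1 := hX 1 zero_le_one ▸ prob_le_one
  rw [ENNReal.ofReal_le_one, Real.exp_le_one_iff] at h
  linarith

lemma measure_le_ofReal (hX : HasExpTail P X l) (hXm : Measurable X) {t : ℝ} (ht : 0 ≤ t) :
    P {ω | X ω ≤ ENNReal.ofReal t} = 1 - ENNReal.ofReal (Real.exp (-l * t)) := by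
  rw [← hX t ht, ← prob_compl_eq_one_sub (measurableSet_lt measurable_const hXm)]
  simp [compl_def]

lemma ae_eq_top (hX : HasExpTail P X 0) (hXm : Measurable X) : ∀ᵐ ω ∂P, X ω = ∞ := by
  have hfin : {ω | X ω ≠ ∞} ⊆ ⋃ n : ℕ, {ω | X ω ≤ ENNReal.ofReal n} := fun ω hω => by
    obtain ⟨n, hn⟩ := ENNReal.exists_nat_gt hω
    exact mem_iUnion.2 ⟨n, by simpa using hn.le⟩
  refine ae_iff.2 (measure_mono_null hfin (measure_iUnion_null fun n => ?_))
  rw [hX.measure_le_ofReal hXm n.cast_nonneg]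
  simp

lemma measure_le_expSurvival (hX : HasExpTail P X l) (hXm : Measurable X) (hm : 0 < m)
    {t : ℝ} (ht : 0 < t) :
    P {ω | t ≤ expSurvival m (X ω)} = ENNReal.ofReal (1 - t ^ (l / m)) := by
  rcases le_or_gt t 1 with ht₁ | ht₁
  · have hc : 0 ≤ -Real.log t / m := div_nonneg (neg_nonneg.2 (Real.log_nonpos ht.le ht₁)) hm.le
    have hpow : Real.exp (-l * (-Real.log t / m)) = t ^ (l / m) := by
      rw [Real.rpow_def_of_pos ht]
      congr 1
      field_simp
    simp only [le_expSurvival_iff hm ht ht₁]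
    rw [hX.measure_le_ofReal hXm hc, hpow, ENNReal.ofReal_sub _ (by positivity),
      ENNReal.ofReal_one]
  · have hempty : {ω | t ≤ expSurvival m (X ω)} = ∅ :=
      eq_empty_of_forall_notMem fun ω hω => (ht₁.trans_le hω).not_ge (expSurvival_le_one hm.le _)
    rw [hempty, measure_empty, eq_comm, ENNReal.ofReal_eq_zero, sub_nonpos]
    exact Real.one_le_rpow ht₁.le (div_nonneg hX.rate_nonneg hm.le)

lemma lintegral_expSurvival (hX : HasExpTail P X l) (hXm : Measurable X) (hm : 0 < m) :
    ∫⁻ ω, ENNReal.ofReal (expSurvival m (X ω)) ∂P = ENNReal.ofReal (l / (l + m)) := by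
  rw [lintegral_eq_lintegral_meas_le (f := fun ω => expSurvival m (X ω)) P
      (ae_of_all _ fun ω => expSurvival_nonneg m (X ω))
      ((measurable_expSurvival m).comp hXm).aemeasurable,
    setLIntegral_congr_fun measurableSet_Ioi fun t ht => hX.measure_le_expSurvival hXm hm ht,
    lintegral_Ioi_ofReal_one_sub_rpow (div_nonneg hX.rate_nonneg hm.le)]
  congr 1
  field_simp

lemma measure_lt (hX : HasExpTail P X l) (hY : HasExpTail P Y m) (hXm : Measurable X)
    (hYm : Measurable Y) (hInd : IndepFun X Y P) :
    P {ω | X ω < Y ω} = ENNReal.ofReal (l / (l + m)) := by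
  rcases hY.rate_nonneg.eq_or_lt with rfl | hm
  · have hfin : {ω | X ω < Y ω} =ᵐ[P] {ω | X ω ≠ ∞} := by
      filter_upwards [hY.ae_eq_top hYm] with ω hω
      change (X ω < Y ω) = (X ω ≠ ∞)
      rw [hω, lt_top_iff_ne_top]
    rw [measure_congr hfin, add_zero]
    rcases hX.rate_nonneg.eq_or_lt with rfl | hl
    · -- both clocks are almost surely `∞`, matching `0 / 0 = 0`
      simpa [ae_iff] using hX.ae_eq_top hXm
    · rw [div_self hl.ne', ENNReal.ofReal_one, ← measure_univ (μ := P)]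
      exact (ae_iff_measure_eq (hXm (measurableSet_singleton ∞)).compl.nullMeasurableSet).1
        (hX.ae_ne_top hl)
  · rw [hInd.measure_lt_eq_lintegral hXm hYm]
    simp_rw [hY.measure_gt]
    rw [lintegral_map (measurable_expSurvival m).ennreal_ofReal hXm,
      hX.lintegral_expSurvival hXm hm]

lemma measure_eq (hX : HasExpTail P X l) (hY : HasExpTail P Y m) (hXm : Measurable X)
    (hYm : Measurable Y) (hlm : 0 < l + m) (hInd : IndepFun X Y P) :
    P {ω | X ω = Y ω} = 0 := by
  have hne : {ω | X ω = Y ω}ᶜ = {ω | X ω < Y ω} ∪ {ω | Y ω < X ω} := by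
    ext ω
    simp [lt_or_lt_iff_ne]
  have hdisj : Disjoint {ω | X ω < Y ω} {ω | Y ω < X ω} :=
    disjoint_left.2 fun ω (h₁ : X ω < Y ω) (h₂ : Y ω < X ω) => lt_asymm h₁ h₂
  have hl := hX.rate_nonneg
  have hm := hY.rate_nonneg
  rw [← prob_compl_eq_one_iff (measurableSet_eq_fun hXm hYm), hne,
    measure_union hdisj (measurableSet_lt hYm hXm),
    hX.measure_lt hY hXm hYm hInd, hY.measure_lt hX hYm hXm hInd.symm,
    ← ENNReal.ofReal_add (by positivity) (by positivity), add_comm m l, ← add_div,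
    div_self hlm.ne', ENNReal.ofReal_one]

lemma measure_le (hX : HasExpTail P X l) (hY : HasExpTail P Y m) (hXm : Measurable X)
    (hYm : Measurable Y) (hlm : 0 < l + m) (hInd : IndepFun X Y P) :
    P {ω | X ω ≤ Y ω} = ENNReal.ofReal (l / (l + m)) := by
  have hle : {ω | X ω ≤ Y ω} = {ω | X ω < Y ω} ∪ {ω | X ω = Y ω} := by
    ext ω
    simp [le_iff_lt_or_eq]
  rw [hle, measure_congr (union_ae_eq_left_of_ae_eq_empty (ae_eq_empty.2
    (hX.measure_eq hY hXm hYm hlm hInd))), hX.measure_lt hY hXm hYm hInd]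

lemma measure_eq_ne_top (hX : HasExpTail P X l) (hY : HasExpTail P Y m) (hXm : Measurable X)
    (hYm : Measurable Y) (hInd : IndepFun X Y P) :
    P {ω | X ω = Y ω ∧ X ω ≠ ∞} = 0 := by
  rcases hX.rate_nonneg.eq_or_lt with rfl | hl
  · exact measure_mono_null (fun ω h => h.2) (ae_iff.1 (hX.ae_eq_top hXm))
  · exact measure_mono_null (fun ω h => h.1)
      (hX.measure_eq hY hXm hYm (by linarith [hY.rate_nonneg]) hInd)

lemma measure_min_eq_min {R D₁ D₂ : Ω → ℝ≥0∞} {m₁ m₂ : ℝ} (hR : HasExpTail P R l)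
    (hD₁ : HasExpTail P D₁ m₁) (hD₂ : HasExpTail P D₂ m₂)
    (hD : HasExpTail P (fun ω => min (D₁ ω) (D₂ ω)) m) (hRm : Measurable R)
    (hD₁m : Measurable D₁) (hD₂m : Measurable D₂) (hlm : 0 < l + m)
    (hInd₁₂ : IndepFun D₁ D₂ P) (hInd : IndepFun R (fun ω => min (D₁ ω) (D₂ ω)) P) :
    P {ω | min (R ω) (D₁ ω) = min (R ω) (D₂ ω)} = ENNReal.ofReal (l / (l + m)) := by
  have hevent : {ω | min (R ω) (D₁ ω) = min (R ω) (D₂ ω)} =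
      {ω | R ω ≤ min (D₁ ω) (D₂ ω)} ∪ {ω | D₁ ω = D₂ ω} := by
    ext ω
    exact min_eq_min_iff
  have htie : {ω | D₁ ω = D₂ ω} \ {ω | R ω ≤ min (D₁ ω) (D₂ ω)} ⊆
      {ω | D₁ ω = D₂ ω ∧ D₁ ω ≠ ∞} := by
    rintro ω ⟨heq : D₁ ω = D₂ ω, hlt : ¬R ω ≤ min (D₁ ω) (D₂ ω)⟩
    refine ⟨heq, fun htop => hlt ?_⟩
    rw [← heq, htop, min_self]
    exact le_top
  have hnull := measure_mono_null htie (hD₁.measure_eq_ne_top hD₂ hD₁m hD₂m hInd₁₂)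
  rw [hevent, ← union_sdiff_self,
    measure_congr (union_ae_eq_left_of_ae_eq_empty (ae_eq_empty.2 hnull))]
  exact hR.measure_le hD hRm (hD₁m.min hD₂m) hlm hInd

end HasExpTail

section Family

variable {κ : Type*} {F : κ → Ω → ℝ≥0∞} {ℓ : κ → ℝ}

lemma iIndepFun.hasExpTail_biInf (hInd : iIndepFun F P) (hF : ∀ k, HasExpTail P (F k) (ℓ k))
    (s : Finset κ) : HasExpTail P (fun ω => ⨅ k ∈ s, F k ω) (∑ k ∈ s, ℓ k) := by
  intro t ht
  have hset : {ω | ENNReal.ofReal t < ⨅ k ∈ s, F k ω} =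
      ⋂ k ∈ s, F k ⁻¹' Ioi (ENNReal.ofReal t) := by
    ext ω
    simp only [mem_ofPred_eq, mem_iInter, mem_preimage, mem_Ioi]
    rw [← Finset.inf_eq_iInf, Finset.lt_inf_iff ENNReal.ofReal_lt_top]
  rw [hset, hInd.measure_inter_preimage_eq_mul s fun _ _ => measurableSet_Ioi]
  simp only [preimage, mem_Ioi, fun k => hF k t ht]
  rw [← ENNReal.ofReal_prod_of_nonneg fun _ _ => (Real.exp_pos _).le, ← Real.exp_sum,
    ← Finset.sum_neg_distrib, Finset.sum_mul]

lemma iIndepFun.indepFun_biInf (hInd : iIndepFun F P) (hFm : ∀ k, Measurable (F k))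
    {s t : Finset κ} (hst : Disjoint s t) :
    IndepFun (fun ω => ⨅ k ∈ s, F k ω) (fun ω => ⨅ k ∈ t, F k ω) P := by
  have hinf (u : Finset κ) : Measurable fun g : u → ℝ≥0∞ => ⨅ k, g k :=
    Measurable.iInf fun k => measurable_pi_apply k
  convert (hInd.indepFun_finset s t hst hFm).comp (hinf s) (hinf t) using 1 <;>
    ext ω <;> simp [iInf_subtype']

theorem iIndepFun.measure_biInf_eq_biInf [IsProbabilityMeasure P] [DecidableEq κ]
    (hInd : iIndepFun F P) (hFm : ∀ k, Measurable (F k)) (hF : ∀ k, HasExpTail P (F k) (ℓ k))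
    (s₁ s₂ : Finset κ) (hpos : 0 < ∑ k ∈ s₁ ∪ s₂, ℓ k) :
    P {ω | ⨅ k ∈ s₁, F k ω = ⨅ k ∈ s₂, F k ω} =
      ENNReal.ofReal ((∑ k ∈ s₁ ∩ s₂, ℓ k) / ∑ k ∈ s₁ ∪ s₂, ℓ k) := by
  have hmeas (s : Finset κ) : Measurable fun ω => ⨅ k ∈ s, F k ω :=
    Measurable.biInf _ s.countable_toSet fun k _ => hFm k
  have hsplit (s t : Finset κ) (ω : Ω) :
      ⨅ k ∈ s, F k ω = min (⨅ k ∈ s ∩ t, F k ω) (⨅ k ∈ s \ t, F k ω) := by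
    rw [← Finset.iInf_union, Finset.union_comm, Finset.sdiff_union_inter]
  have hsymm : (fun ω => min (⨅ k ∈ s₁ \ s₂, F k ω) (⨅ k ∈ s₂ \ s₁, F k ω)) =
      fun ω => ⨅ k ∈ s₁ ∆ s₂, F k ω := by
    ext ω
    rw [← Finset.iInf_union, symmDiff_def]
    rfl
  have hsum : ∑ k ∈ s₁ ∪ s₂, ℓ k = ∑ k ∈ s₁ ∩ s₂, ℓ k + ∑ k ∈ s₁ ∆ s₂, ℓ k := by
    have := Finset.sum_union (f := ℓ) (disjoint_symmDiff_inf s₁ s₂).symm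
    rwa [← Finset.sup_eq_union, inf_sup_symmDiff] at this
  have hExp := hInd.hasExpTail_biInf hF
  simp_rw [hsplit s₁ s₂, hsplit s₂ s₁, Finset.inter_comm s₂ s₁]
  rw [hsum]
  refine HasExpTail.measure_min_eq_min (hExp _) (hExp _) (hExp _) (hsymm ▸ hExp _) (hmeas _)
    (hmeas _) (hmeas _) (hsum ▸ hpos) (hInd.indepFun_biInf hFm disjoint_sdiff_sdiff) ?_
  rw [hsymm]
  exact hInd.indepFun_biInf hFm (disjoint_symmDiff_inf s₁ s₂).symm

end Family

end ProbabilityTheory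

section Clocks

variable {ι : Type*} [Fintype ι] (w₁ w₂ : ι → ℝ)

/-- Clock `(i, true)` is the clock `r' i` shared by both weight assignments and `(i, false)` is
the private clock `r'' i`, which the minimum rank of `w₁` reads iff `w₂ i < w₁ i`. -/
noncomputable def activeClocks : Finset (ι × Bool) :=
  Finset.univ.filter fun p => p.2 = true ∨ ¬ w₁ p.1 ≤ w₂ p.1

noncomputable def clockRate (p : ι × Bool) : ℝ :=
  if p.2 then min (w₁ p.1) (w₂ p.1) else |w₁ p.1 - w₂ p.1|

variable [DecidableEq ι]

lemma sum_clockRate_inter :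
    ∑ p ∈ activeClocks w₁ w₂ ∩ activeClocks w₂ w₁, clockRate w₁ w₂ p =
      ∑ i, min (w₁ i) (w₂ i) := by
  rw [activeClocks, activeClocks, ← Finset.filter_and, Finset.sum_filter, Fintype.sum_prod_type]
  refine Finset.sum_congr rfl fun i _ => ?_
  simpa [clockRate] using fun h₁ h₂ => (lt_asymm h₁ h₂).elim

lemma sum_clockRate_union :
    ∑ p ∈ activeClocks w₁ w₂ ∪ activeClocks w₂ w₁, clockRate w₁ w₂ p =
      ∑ i, max (w₁ i) (w₂ i) := by
  rw [activeClocks, activeClocks, ← Finset.filter_or, Finset.sum_filter, Fintype.sum_prod_type]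
  refine Finset.sum_congr rfl fun i _ => ?_
  rcases eq_or_ne (w₁ i) (w₂ i) with h | h
  · simp [clockRate, h]
  · simp [clockRate, h.symm, ← max_sub_min_eq_abs']

end Clocks

theorem stmt_5_general {Ω ι : Type*} [MeasurableSpace Ω] [Fintype ι]
    (P : Measure Ω) [IsProbabilityMeasure P]
    (w1 w2 : ι → ℝ)
    (r' r'' : ι → Ω → ℝ≥0∞)
    (hmeas' : ∀ i, Measurable (r' i)) (hmeas'' : ∀ i, Measurable (r'' i))
    -- all the variables `r' i`, `r'' i` (over all keys) are mutually independent
    (hInd : iIndepFun (m := fun _ : ι × Bool => (inferInstance : MeasurableSpace ℝ≥0∞))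
      (fun p => if p.2 then r' p.1 else r'' p.1) P)
    -- `r' i ~ Exp(min (w1 i) (w2 i))`, with `Exp 0` interpreted as the constant `∞`
    (htail' : ∀ i, ∀ t : ℝ, 0 ≤ t →
      P {ω | ENNReal.ofReal t < r' i ω} = ENNReal.ofReal (Real.exp (-(min (w1 i) (w2 i)) * t)))
    -- `r'' i ~ Exp(|w1 i - w2 i|)`, with `Exp 0` interpreted as the constant `∞`
    (htail'' : ∀ i, ∀ t : ℝ, 0 ≤ t →
      P {ω | ENNReal.ofReal t < r'' i ω} = ENNReal.ofReal (Real.exp (-(|w1 i - w2 i|) * t)))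
    (hpos : 0 < ∑ i, max (w1 i) (w2 i)) :
    P {ω | (⨅ i, (if w1 i ≤ w2 i then r' i ω else min (r' i ω) (r'' i ω)))
          = (⨅ i, (if w2 i ≤ w1 i then r' i ω else min (r' i ω) (r'' i ω)))}
      = ENNReal.ofReal ((∑ i, min (w1 i) (w2 i)) / (∑ i, max (w1 i) (w2 i))) := by
  classical
  have hFm (p : ι × Bool) : Measurable (if p.2 then r' p.1 else r'' p.1) := by
    rcases p with ⟨i, _ | _⟩ <;> simp [hmeas', hmeas'']
  have hExp (p : ι × Bool) :
      HasExpTail P (if p.2 then r' p.1 else r'' p.1) (clockRate w1 w2 p) := by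
    rcases p with ⟨i, _ | _⟩
    exacts [htail'' i, htail' i]
  have h := hInd.measure_biInf_eq_biInf hFm hExp (activeClocks w1 w2) (activeClocks w2 w1)
    (sum_clockRate_union w1 w2 ▸ hpos)
  simp only [ite_apply, sum_clockRate_inter, sum_clockRate_union] at h
  simp_rw [iInf_ite_min_eq_biInf]
  exact h

/-- Weighted Jaccard property of independent-differences consistent exponential ranks. -/
theorem stmt_5 {Ω ι : Type*} [MeasurableSpace Ω] [Fintype ι] [Nonempty ι]
    (P : Measure Ω) [IsProbabilityMeasure P]
    (w1 w2 : ι → ℝ) (hw1 : ∀ i, 0 ≤ w1 i) (hw2 : ∀ i, 0 ≤ w2 i)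
    (r' r'' : ι → Ω → ℝ≥0∞)
    (hmeas' : ∀ i, Measurable (r' i)) (hmeas'' : ∀ i, Measurable (r'' i))
    -- all the variables `r' i`, `r'' i` (over all keys) are mutually independent
    (hInd : iIndepFun (m := fun _ : ι × Bool => (inferInstance : MeasurableSpace ℝ≥0∞))
      (fun p => if p.2 then r' p.1 else r'' p.1) P)
    -- `r' i ~ Exp(min (w1 i) (w2 i))`, with `Exp 0` interpreted as the constant `∞`
    (htail' : ∀ i, ∀ t : ℝ, 0 ≤ t →
      P {ω | ENNReal.ofReal t < r' i ω} = ENNReal.ofReal (Real.exp (-(min (w1 i) (w2 i)) * t)))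
    -- `r'' i ~ Exp(|w1 i - w2 i|)`, with `Exp 0` interpreted as the constant `∞`
    (htail'' : ∀ i, ∀ t : ℝ, 0 ≤ t →
      P {ω | ENNReal.ofReal t < r'' i ω} = ENNReal.ofReal (Real.exp (-(|w1 i - w2 i|) * t)))
    (hpos : 0 < ∑ i, max (w1 i) (w2 i)) :
    P {ω | (⨅ i, (if w1 i ≤ w2 i then r' i ω else min (r' i ω) (r'' i ω)))
          = (⨅ i, (if w2 i ≤ w1 i then r' i ω else min (r' i ω) (r'' i ω)))}
      = ENNReal.ofReal ((∑ i, min (w1 i) (w2 i)) / (∑ i, max (w1 i) (w2 i))) :=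
  stmt_5_general P w1 w2 r' r'' hmeas' hmeas'' hInd htail' htail'' hpos
end

section
/- Let p_max, p_min ∈ (0, 1] with p_min ≤ p_max, and weights w_max ≥ w_min ≥ 0 with p_max/p_min ≤ w_max/w_min (when w_min > 0). Consider a coupled random outcome where with probability p_min the estimate is a = w_max/p_max − w_min/p_min, with probability p_max − p_min the estimate is a = w_max/p_max, and otherwise a = 0. Then a ≥ 0 always, and E[a] = w_max − w_min. -/
/-!
Under consistent ranks the L1 estimator is the difference of two Horvitz–Thompson estimators,
`w_max / p_max` on `E_max` and `w_min / p_min` on `E_min`; each is unbiased for its weight, so by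
linearity the difference is unbiased for `w_max − w_min`. Nonnegativity is the only place where
coordination matters: since `E_min ⊆ E_max`, the subtracted term is paid only on `E_min`, where
it is covered because the ratio condition `p_max / p_min ≤ w_max / w_min` says
`w_min / p_min ≤ w_max / p_max`.
-/

open MeasureTheory
open scoped Classical

noncomputable def htEstimator {Ω : Type*} (E : Set Ω) (w p : ℝ) : Ω → ℝ :=
  E.indicator fun _ => w / p

lemma htEstimator_sub_htEstimator_of_subset {Ω : Type*} {Emin Emax : Set Ω}
    (hnested : Emin ⊆ Emax) (wmin wmax pmin pmax : ℝ) (ω : Ω) :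
    htEstimator Emax wmax pmax ω - htEstimator Emin wmin pmin ω =
      if ω ∈ Emin then wmax / pmax - wmin / pmin
      else if ω ∈ Emax then wmax / pmax else 0 := by
  by_cases hmin : ω ∈ Emin
  · simp [htEstimator, hmin, hnested hmin]
  · by_cases hmax : ω ∈ Emax <;> simp [htEstimator, hmin, hmax]

section HorvitzThompson

variable {Ω : Type*} [MeasurableSpace Ω] {P : Measure Ω} {E : Set Ω} {w p : ℝ}

lemma integrable_htEstimator (hE : MeasurableSet E) (hPE : P E ≠ ⊤) :
    Integrable (htEstimator E w p) P :=
  (integrable_indicator_iff hE).2 (integrableOn_const hPE)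

lemma integral_htEstimator (hE : MeasurableSet E) (hp : 0 < p) (hPE : P E = ENNReal.ofReal p) :
    ∫ ω, htEstimator E w p ω ∂P = w := by
  rw [htEstimator, integral_indicator_const _ hE, measureReal_def, hPE,
    ENNReal.toReal_ofReal hp.le, smul_eq_mul]
  field_simp

end HorvitzThompson

lemma div_le_div_of_ratio_le {wmin wmax pmin pmax : ℝ} (hpmin : 0 < pmin) (hpmax : 0 < pmax)
    (hwmin : 0 ≤ wmin) (hwmax : 0 ≤ wmax) (hratio : 0 < wmin → pmax / pmin ≤ wmax / wmin) :
    wmin / pmin ≤ wmax / pmax := by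
  rcases hwmin.lt_or_eq with hwmin | rfl
  · have h := hratio hwmin
    rw [div_le_div_iff₀ hpmin hwmin] at h
    rw [div_le_div_iff₀ hpmin hpmax]
    linarith
  · rw [zero_div]
    positivity

theorem stmt_9_general {Ω : Type*} [MeasurableSpace Ω] (P : Measure Ω)
    (Emin Emax : Set Ω) (hEmin : MeasurableSet Emin) (hEmax : MeasurableSet Emax)
    (hnested : Emin ⊆ Emax)
    (pmin pmax wmin wmax : ℝ)
    (hp0 : 0 < pmin) (hpm : pmin ≤ pmax)
    (hw0 : 0 ≤ wmin) (hwm : wmin ≤ wmax)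
    (hPmin : P Emin = ENNReal.ofReal pmin) (hPmax : P Emax = ENNReal.ofReal pmax)
    (hratio : 0 < wmin → pmax / pmin ≤ wmax / wmin)
    (a : Ω → ℝ)
    (ha : ∀ ω, a ω = if ω ∈ Emin then wmax / pmax - wmin / pmin
                     else if ω ∈ Emax then wmax / pmax else 0) :
    (∀ ω, 0 ≤ a ω) ∧ (∫ ω, a ω ∂P) = wmax - wmin := by
  have hpmax : 0 < pmax := hp0.trans_le hpm
  have hle : wmin / pmin ≤ wmax / pmax :=
    div_le_div_of_ratio_le hp0 hpmax hw0 (hw0.trans hwm) hratio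
  have ha_sub : a = htEstimator Emax wmax pmax - htEstimator Emin wmin pmin := by
    funext ω
    rw [ha, Pi.sub_apply, htEstimator_sub_htEstimator_of_subset hnested]
  refine ⟨fun ω => ?_, ?_⟩
  · rw [ha ω]
    split_ifs
    · exact sub_nonneg.2 hle
    · exact (div_nonneg hw0 hp0.le).trans hle
    · exact le_rfl
  · rw [ha_sub, integral_sub' (integrable_htEstimator hEmax (hPmax ▸ ENNReal.ofReal_ne_top))
      (integrable_htEstimator hEmin (hPmin ▸ ENNReal.ofReal_ne_top)),
      integral_htEstimator hEmax hpmax hPmax, integral_htEstimator hEmin hp0 hPmin]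

/-- The coordinated L1 (range) estimator `a = a^max − a^min` is nonnegative and unbiased
for `wmax − wmin`, given nested inclusion events with probabilities `pmin ≤ pmax` and
the ratio condition `pmax/pmin ≤ wmax/wmin` (when `wmin > 0`). -/
theorem stmt_9 {Ω : Type*} [MeasurableSpace Ω] (P : Measure Ω) [IsProbabilityMeasure P]
    (Emin Emax : Set Ω) (hEmin : MeasurableSet Emin) (hEmax : MeasurableSet Emax)
    (hnested : Emin ⊆ Emax)
    (pmin pmax wmin wmax : ℝ)
    (hp0 : 0 < pmin) (hpm : pmin ≤ pmax) (hp1 : pmax ≤ 1)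
    (hw0 : 0 ≤ wmin) (hwm : wmin ≤ wmax)
    (hPmin : P Emin = ENNReal.ofReal pmin) (hPmax : P Emax = ENNReal.ofReal pmax)
    (hratio : 0 < wmin → pmax / pmin ≤ wmax / wmin)
    (a : Ω → ℝ)
    (ha : ∀ ω, a ω = if ω ∈ Emin then wmax / pmax - wmin / pmin
                     else if ω ∈ Emax then wmax / pmax else 0) :
    (∀ ω, 0 ≤ a ω) ∧ (∫ ω, a ω ∂P) = wmax - wmin :=
  stmt_9_general P Emin Emax hEmin hEmax hnested pmin pmax wmin wmax hp0 hpm hw0 hwm hPmin hPmax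
    hratio a ha
end

section
/- With the coupling of the previous context (min-inclusion event nested inside max-inclusion event, probabilities p_min ≤ p_max), the variance of the L1 estimator satisfies Var[a^{L1}] = Var[a^{max}] + Var[a^{min}] − 2·w_max·w_min·(1/p_max − 1), and in particular Var[a^{L1}] ≤ Var[a^{max}] + Var[a^{min}]. -/
open MeasureTheory
open scoped Classical

/-!
Since `Emin ⊆ Emax`, the estimator `a^{L1} = (wmax / pmax) 𝟙_{Emax} - (wmin / pmin) 𝟙_{Emin}`
takes only three values, on `Emin`, on `Emax \ Emin` and off `Emax`, so its second moment about
its mean `wmax - wmin` is an explicit combination of `pmin` and `pmax`. The cross term comes from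
`𝟙_{Emin} 𝟙_{Emax} = 𝟙_{Emin}` and equals `-2 wmax wmin (1 / pmax - 1) ≤ 0`.
-/

section NestedIndicators

variable {Ω : Type*} {E F : Set Ω}

theorem comp_indicator_sub_indicator_of_subset (hEF : E ⊆ F) (g : ℝ → ℝ) (a b : ℝ)
    (ω : Ω) :
    g (F.indicator (fun _ => a) ω - E.indicator (fun _ => b) ω)
      = g 0 + F.indicator (fun _ => g a - g 0) ω + E.indicator (fun _ => g (a - b) - g a) ω := by
  by_cases hE : ω ∈ E
  · simp [hE, hEF hE]
  · by_cases hF : ω ∈ F <;> simp [hE, hF]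

variable [MeasurableSpace Ω] {P : Measure Ω} [IsProbabilityMeasure P]

theorem integral_comp_indicator_sub_indicator_of_subset (hE : MeasurableSet E)
    (hF : MeasurableSet F) (hEF : E ⊆ F) (g : ℝ → ℝ) (a b : ℝ) :
    ∫ ω, g (F.indicator (fun _ => a) ω - E.indicator (fun _ => b) ω) ∂P
      = g 0 + (g a - g 0) * P.real F + (g (a - b) - g a) * P.real E := by
  simp_rw [comp_indicator_sub_indicator_of_subset hEF]
  have hIF : Integrable (F.indicator fun _ => g a - g 0) P := (integrable_const _).indicator hF
  have hIE : Integrable (E.indicator fun _ => g (a - b) - g a) P :=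
    (integrable_const _).indicator hE
  have hI0F : Integrable (fun ω => g 0 + F.indicator (fun _ => g a - g 0) ω) P :=
    (integrable_const _).add hIF
  rw [integral_add hI0F hIE, integral_add (integrable_const _) hIF,
    integral_indicator_const _ hF, integral_indicator_const _ hE, integral_const, probReal_univ,
    smul_eq_mul, smul_eq_mul, smul_eq_mul, one_mul, mul_comm (P.real F), mul_comm (P.real E)]

end NestedIndicators

/-- Variance of the L1 estimator `a^{L1} = a^{max} − a^{min}` with nested inclusion events:
`Var[a^{L1}] = Var[a^{max}] + Var[a^{min}] − 2 wmax wmin (1/pmax − 1)`, hence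
`Var[a^{L1}] ≤ Var[a^{max}] + Var[a^{min}]`. -/
theorem stmt_10 {Ω : Type*} [MeasurableSpace Ω] (P : Measure Ω) [IsProbabilityMeasure P]
    (Emin Emax : Set Ω) (hEmin : MeasurableSet Emin) (hEmax : MeasurableSet Emax)
    (hnested : Emin ⊆ Emax)
    (pmin pmax wmin wmax : ℝ)
    (hp0 : 0 < pmin) (hpm : pmin ≤ pmax) (hp1 : pmax ≤ 1)
    (hw0 : 0 ≤ wmin) (hwm : wmin ≤ wmax)
    (hPmin : P Emin = ENNReal.ofReal pmin) (hPmax : P Emax = ENNReal.ofReal pmax)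
    (amax amin aL1 : Ω → ℝ)
    (hamax : ∀ ω, amax ω = if ω ∈ Emax then wmax / pmax else 0)
    (hamin : ∀ ω, amin ω = if ω ∈ Emin then wmin / pmin else 0)
    (haL1 : ∀ ω, aL1 ω = amax ω - amin ω) :
    (∫ ω, (aL1 ω - (wmax - wmin)) ^ 2 ∂P)
        = wmax ^ 2 * (1 / pmax - 1) + wmin ^ 2 * (1 / pmin - 1)
          - 2 * wmax * wmin * (1 / pmax - 1)
      ∧ (∫ ω, (aL1 ω - (wmax - wmin)) ^ 2 ∂P)
        ≤ wmax ^ 2 * (1 / pmax - 1) + wmin ^ 2 * (1 / pmin - 1) := by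
  have hpmax : 0 < pmax := hp0.trans_le hpm
  have haL1_eq : aL1 = fun ω =>
      Emax.indicator (fun _ => wmax / pmax) ω - Emin.indicator (fun _ => wmin / pmin) ω := by
    funext ω
    simp only [haL1, hamax, hamin, Set.indicator]
  have hvar : (∫ ω, (aL1 ω - (wmax - wmin)) ^ 2 ∂P)
      = wmax ^ 2 * (1 / pmax - 1) + wmin ^ 2 * (1 / pmin - 1)
        - 2 * wmax * wmin * (1 / pmax - 1) := by
    rw [haL1_eq, integral_comp_indicator_sub_indicator_of_subset hEmin hEmax hnested
      (fun x => (x - (wmax - wmin)) ^ 2), measureReal_def, measureReal_def, hPmin, hPmax,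
      ENNReal.toReal_ofReal hp0.le, ENNReal.toReal_ofReal hpmax.le]
    field_simp
    ring
  have hcross : 0 ≤ 2 * wmax * wmin * (1 / pmax - 1) := by
    have : 1 ≤ 1 / pmax := by rw [le_div_iff₀ hpmax]; linarith
    have : 0 ≤ wmax := hw0.trans hwm
    positivity
  exact ⟨hvar, by linarith⟩
end

section
/- Let d₁, ..., d_h be independent random variables with d_j ~ Exp(w_j − w_{j−1}) where 0 = w₀ ≤ w₁ ≤ ... ≤ w_h (interpreting Exp(0) as +∞), and define r_j = min(d₁, ..., d_j). Then r_j is exponentially distributed with rate w_j for each j, and the sequence r₁ ≥ r₂ ≥ ... ≥ r_h is monotone non-increasing. -/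
/-!
Since `c < min_{a ≤ j} d a` means `c < d a` for every `a ≤ j`, independence turns the tail of
`r j` into the product of the tails of `d 0, …, d j`. These are exponentials whose rates
`w (a + 1) - w a` telescope to `w (j + 1)`, which is the statement that the minimum of
independent exponentials has the sum of their rates.
-/

open MeasureTheory ProbabilityTheory
open scoped ENNReal

theorem ProbabilityTheory.iIndepFun.measure_lt_finset_inf {ι Ω β : Type*} [MeasurableSpace Ω]
    {P : Measure Ω} [LinearOrder β] [OrderTop β] [TopologicalSpace β] [MeasurableSpace β]
    [OpensMeasurableSpace β] [ClosedIicTopology β] {d : ι → Ω → β} (hInd : iIndepFun d P)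
    (s : Finset ι) {c : β} (hc : c < ⊤) :
    P {ω | c < s.inf (fun a => d a ω)} = ∏ a ∈ s, P {ω | c < d a ω} := by
  have hset : {ω | c < s.inf (fun a => d a ω)} = ⋂ a ∈ s, d a ⁻¹' Set.Ioi c := by
    ext ω
    simp only [Set.mem_ofPred_eq, Set.mem_iInter, Set.mem_preimage, Set.mem_Ioi]
    exact Finset.lt_inf_iff hc
  rw [hset, hInd.meas_biInter fun a _ => ⟨Set.Ioi c, measurableSet_Ioi, rfl⟩]
  rfl

theorem Fin.sum_Iic_val_succ_sub {G : Type*} [AddCommGroup G] (f : ℕ → G) {n : ℕ} (j : Fin n) :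
    ∑ a ∈ Finset.Iic j, (f (a + 1) - f a) = f (j + 1) - f 0 := by
  rw [← Finset.sum_range_sub, Nat.range_succ_eq_Iic, ← Fin.map_valEmbedding_Iic,
    Finset.sum_map]
  rfl

theorem ENNReal.prod_ofReal_exp {ι : Type*} (s : Finset ι) (f : ι → ℝ) :
    ∏ a ∈ s, ENNReal.ofReal (Real.exp (f a)) = ENNReal.ofReal (Real.exp (∑ a ∈ s, f a)) := by
  rw [Real.exp_sum, ENNReal.ofReal_prod_of_nonneg fun a _ => (Real.exp_pos _).le]

theorem stmt_19_general {Ω : Type*} [MeasurableSpace Ω] (P : Measure Ω)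
    (h : ℕ) (w : ℕ → ℝ) (hw0 : w 0 = 0)
    (d : Fin h → Ω → ℝ≥0∞)
    (hInd : iIndepFun d P)
    (hdtail : ∀ j : Fin h, ∀ t : ℝ, 0 ≤ t →
      P {ω | ENNReal.ofReal t < d j ω}
        = ENNReal.ofReal (Real.exp (-(w (j + 1) - w j) * t)))
    (r : Fin h → Ω → ℝ≥0∞)
    (hr : ∀ (j : Fin h) ω, r j ω = (Finset.Iic j).inf (fun a => d a ω)) :
    (∀ j : Fin h, ∀ t : ℝ, 0 ≤ t →
        P {ω | ENNReal.ofReal t < r j ω} = ENNReal.ofReal (Real.exp (-(w (j + 1)) * t)))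
      ∧ ∀ ω, ∀ j k : Fin h, j ≤ k → r k ω ≤ r j ω := by
  refine ⟨fun j t ht => ?_, fun ω j k hjk => ?_⟩
  · have hrates : ∑ a ∈ Finset.Iic j, -(w (a + 1) - w a) * t = -(w (j + 1)) * t := by
      rw [← Finset.sum_mul, Finset.sum_neg_distrib, Fin.sum_Iic_val_succ_sub, hw0, sub_zero]
    simp_rw [hr]
    rw [hInd.measure_lt_finset_inf _ ENNReal.ofReal_lt_top,
      Finset.prod_congr rfl fun a _ => hdtail a t ht, ENNReal.prod_ofReal_exp, hrates]
  · rw [hr, hr]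
    exact Finset.inf_mono (Finset.Iic_subset_Iic.mpr hjk)

/-- Independent-differences rank construction: with `0 = w 0 ≤ w 1 ≤ ... ≤ w h` and
independent `d j ~ Exp(w (j+1) − w j)` (interpreting `Exp 0` as the constant `∞`,
characterized here by the tail function), the ranks `r j = min (d 0, ..., d j)` are
exponentially distributed with rate `w (j+1)` and form a non-increasing sequence. -/
theorem stmt_19 {Ω : Type*} [MeasurableSpace Ω] (P : Measure Ω) [IsProbabilityMeasure P]
    (h : ℕ) (w : ℕ → ℝ) (hw0 : w 0 = 0) (hwmono : Monotone w)
    (d : Fin h → Ω → ℝ≥0∞) (hdmeas : ∀ j, Measurable (d j))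
    (hInd : iIndepFun d P)
    (hdtail : ∀ j : Fin h, ∀ t : ℝ, 0 ≤ t →
      P {ω | ENNReal.ofReal t < d j ω}
        = ENNReal.ofReal (Real.exp (-(w (j + 1) - w j) * t)))
    (r : Fin h → Ω → ℝ≥0∞)
    (hr : ∀ (j : Fin h) ω, r j ω = (Finset.Iic j).inf (fun a => d a ω)) :
    (∀ j : Fin h, ∀ t : ℝ, 0 ≤ t →
        P {ω | ENNReal.ofReal t < r j ω} = ENNReal.ofReal (Real.exp (-(w (j + 1)) * t)))
      ∧ ∀ ω, ∀ j k : Fin h, j ≤ k → r k ω ≤ r j ω :=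
  stmt_19_general P h w hw0 d hInd hdtail r hr
end
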